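/- arXiv:1910.06504 — 3 statements merged into one kernel-verified Lean document; each statement's English description precedes it below -/
import Mathlib

section
/- Let A and D be C*-algebras, let φ, ψ : A → D be *-homomorphisms, and suppose v ∈ D is a contraction (‖v‖ ≤ 1) such that v* φ(a) v = ψ(a) for all a ∈ A. Then: (a) v v* commutes with φ(a) for every a ∈ A; (b) v* v ψ(a) = ψ(a) for every a ∈ A; and (c) φ(a) v = v ψ(a) for every a ∈ A. -/
private lemma key_commute {A D : Type*} [NonUnitalCStarAlgebra A] [NonUnitalCStarAlgebra D]
    (φ ψ : A →⋆ₙₐ[ℂ] D) (v : D) (hv : ‖v‖ ≤ 1)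
    (h : ∀ a : A, star v * φ a * v = ψ a) (a : A) : φ a * v = v * ψ a := by
  letI : PartialOrder (Unitization ℂ D) := CStarAlgebra.spectralOrder _
  haveI : StarOrderedRing (Unitization ℂ D) := CStarAlgebra.spectralOrderedRing _
  set w : D := φ a * v - v * ψ a with hw
  have hww : star w * w = ψ (star a) * (star v * v) * ψ a - ψ (star a) * ψ a := by
    have h2 : star v * φ (star a) * v = ψ (star a) := h (star a)
    have h3 : star v * φ a * v = ψ a := h a
    have hsw : star w = star v * φ (star a) - ψ (star a) * star v := by
      simp [hw, star_sub, star_mul, map_star]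
    rw [hsw, hw]
    have e1 : (star v * φ (star a)) * (φ a * v) = ψ (star a) * ψ a := by
      rw [← map_mul ψ, ← h (star a * a), map_mul φ]
      simp only [mul_assoc]
    have e2 : (star v * φ (star a)) * (v * ψ a) = ψ (star a) * ψ a := by
      rw [← mul_assoc, h2]
    have e3 : (ψ (star a) * star v) * (φ a * v) = ψ (star a) * ψ a := by
      rw [mul_assoc, ← mul_assoc (star v), h3]
    have e4 : (ψ (star a) * star v) * (v * ψ a) = ψ (star a) * (star v * v) * ψ a := by
      simp only [mul_assoc]
    rw [sub_mul, mul_sub, mul_sub, e1, e2, e3, e4]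
    abel
  -- pass to the unitization
  set V : Unitization ℂ D := (v : Unitization ℂ D) with hV
  have hVle : star V * V ≤ 1 := by
    rw [← CStarAlgebra.norm_le_one_iff_of_nonneg _ (star_mul_self_nonneg _)]
    calc ‖star V * V‖ = ‖V‖ ^ 2 := by rw [CStarRing.norm_star_mul_self, sq]
      _ ≤ 1 := by
            rw [hV, Unitization.norm_inr]
            exact pow_le_one₀ (norm_nonneg v) hv
  have hle : ((star w * w : D) : Unitization ℂ D) ≤ 0 := by
    have : ((star w * w : D) : Unitization ℂ D)
        = - (star ((ψ a : D) : Unitization ℂ D) *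
            (1 - star V * V) * ((ψ a : D) : Unitization ℂ D)) := by
      rw [hww, hV]
      simp only [map_star, Unitization.inr_sub, Unitization.inr_mul, Unitization.inr_star]
      noncomm_ring
    rw [this, neg_nonpos]
    exact star_left_conjugate_nonneg (by rwa [sub_nonneg]) _
  have hge : (0 : Unitization ℂ D) ≤ ((star w * w : D) : Unitization ℂ D) := by
    simp only [Unitization.inr_mul, Unitization.inr_star]
    exact star_mul_self_nonneg _
  have : ((star w * w : D) : Unitization ℂ D) = ((0 : D) : Unitization ℂ D) := by
    rw [Unitization.inr_zero]; exact le_antisymm hle hge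
  have hzero : star w * w = 0 := Unitization.inr_injective (R := ℂ) this
  have hw0 : w = 0 := (CStarRing.star_mul_self_eq_zero_iff w).mp hzero
  rwa [hw, sub_eq_zero] at hw0

/-- Lemma on conjugation by a contraction.
Let `A` and `D` be C*-algebras, `φ ψ : A → D` *-homomorphisms, and `v ∈ D` a contraction
with `v* φ(a) v = ψ(a)` for all `a`.  Then `v v*` commutes with the image of `φ`,
`v* v ψ(a) = ψ(a)` for all `a`, and `φ(a) v = v ψ(a)` for all `a`. -/
theorem conj_contraction_props {A D : Type*} [NonUnitalCStarAlgebra A] [NonUnitalCStarAlgebra D]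
    (φ ψ : A →⋆ₙₐ[ℂ] D) (v : D) (hv : ‖v‖ ≤ 1)
    (h : ∀ a : A, star v * φ a * v = ψ a) :
    (∀ a : A, (v * star v) * φ a = φ a * (v * star v)) ∧
    (∀ a : A, (star v * v) * ψ a = ψ a) ∧
    (∀ a : A, φ a * v = v * ψ a) := by
  have key : ∀ a : A, φ a * v = v * ψ a := key_commute φ ψ v hv h
  have key' : ∀ a : A, star v * φ a = ψ a * star v := by
    intro a
    have := congrArg star (key (star a))
    simpa [star_mul, map_star] using this
  refine ⟨fun a => ?_, fun a => ?_, key⟩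
  · calc (v * star v) * φ a = v * (star v * φ a) := mul_assoc _ _ _
      _ = v * (ψ a * star v) := by rw [key']
      _ = (v * ψ a) * star v := (mul_assoc _ _ _).symm
      _ = (φ a * v) * star v := by rw [key]
      _ = φ a * (v * star v) := mul_assoc _ _ _
  · calc (star v * v) * ψ a = star v * (v * ψ a) := mul_assoc _ _ _
      _ = star v * (φ a * v) := by rw [key]
      _ = star v * φ a * v := (mul_assoc _ _ _).symm
      _ = ψ a := h a
end

section
/- Any contractive nuclear map is a point-norm limit of maps factoring via contractive c.p. maps through matrix algebras: if A and B are C*-algebras and ρ : A → B is a nuclear c.p. map with ‖ρ‖ ≤ 1, then for every finite subset F ⊆ A and every ε > 0 there exist n ≥ 1 and c.p. maps ψ : A → Mₙ(ℂ) and η : Mₙ(ℂ) → B with ‖ψ‖ ≤ 1 and ‖η‖ ≤ 1 such that ‖ρ(a) − η(ψ(a))‖ < ε for all a ∈ F. -/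
open scoped Matrix.Norms.L2Operator

/-- A linear map between (C*-)algebras is completely positive if the induced entrywise map on
`n × n` matrices sends positive elements (i.e. elements of the form `star y * y`) to positive
elements, for every `n`. -/
def IsCPMap {A B : Type*} [NonUnitalRing A] [StarRing A] [Module ℂ A]
    [NonUnitalRing B] [StarRing B] [Module ℂ B] (φ : A →ₗ[ℂ] B) : Prop :=
  ∀ (n : ℕ) (y : Matrix (Fin n) (Fin n) A), ∃ z : Matrix (Fin n) (Fin n) B,
    (star y * y).map φ = star z * z

/-- A map between C*-algebras is nuclear if it can be approximated in the point-norm topology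
by compositions of completely positive maps through matrix algebras. -/
def IsNuclearMap {A B : Type*} [NonUnitalRing A] [StarRing A] [Module ℂ A]
    [NonUnitalNormedRing B] [StarRing B] [Module ℂ B] (ρ : A → B) : Prop :=
  ∀ (F : Finset A) (ε : ℝ), 0 < ε →
    ∃ (n : ℕ), 0 < n ∧
      ∃ (ψ : A →ₗ[ℂ] Matrix (Fin n) (Fin n) ℂ) (η : Matrix (Fin n) (Fin n) ℂ →ₗ[ℂ] B),
        IsCPMap ψ ∧ IsCPMap η ∧ ∀ a ∈ F, ‖ρ a - η (ψ a)‖ < ε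

open scoped CStarAlgebra InnerProductSpace WithCStarModule Matrix

/-!
Cut each `a ∈ F` down to `e⋆ a e` with an element `e` of an approximate unit, and approximate `ρ`
on these elements and on `e⋆ e` by c.p. maps `ψ₀ : A → Mₙ` and `η₀ : Mₙ → B`. For a c.p. map `φ`,
Cauchy–Schwarz for the positive matrix `φ₂(y⋆ y)` with `y = [[c, a c], [0, t]]` gives
`‖φ(c⋆ a c)‖ ≤ ‖a‖ ‖φ(c⋆ c)‖`. So if `h = ψ₀(e⋆ e)`, `m ≈ h^(1/2)` and `k = m⁻¹` (regularised by
the functional calculus), then `ψ = k⋆ ψ₀(e⋆ · e) k` is contractive, `η = η₀(m⋆ · m)` has norm about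
`‖η₀ h‖ ≈ ‖ρ(e⋆ e)‖ ≤ 1`, and `η ∘ ψ = η₀ ∘ ψ₀ ∘ (e⋆ · e)`. Dividing `η` by its norm bound `1 + 2δ`
costs only `O(δ)` on `F`.
-/

theorem Matrix.star_mul_diagonal_mul_self_apply {n R : Type*} [Fintype n] [DecidableEq n]
    [NonUnitalRing R] [StarRing R] (y : Matrix n n R) (c : R) (i j : n) :
    (star (y * diagonal fun _ => c) * (y * diagonal fun _ => c) : Matrix n n R) i j
      = star c * (star y * y) i j * c := by
  rw [mul_apply, mul_apply, Finset.mul_sum, Finset.sum_mul]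
  simp only [star_apply, mul_diagonal, star_mul, mul_assoc]

section CauchySchwarz

variable {C : Type*} [NonUnitalCStarAlgebra C]

theorem Matrix.norm_conjTranspose_mul_self_apply_le {m n : Type*} [Fintype m]
    (z : Matrix m n C) (i j : n) :
    ‖(zᴴ * z) i j‖ ≤ √‖(zᴴ * z) i i‖ * √‖(zᴴ * z) j j‖ := by
  let _ := CStarAlgebra.spectralOrder C
  have := CStarAlgebra.spectralOrderedRing C
  let col (j : n) : C⋆ᵐᵒᵈ(C, m → C) :=
    (WithCStarModule.equiv C (m → C)).symm fun k => star (z k j)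
  have hinner (i j : n) : ⟪col j, col i⟫_C = (zᴴ * z) i j := by
    simp [col, WithCStarModule.pi_inner, WithCStarModule.inner_def, Matrix.mul_apply]
  have hnorm (j : n) : ‖col j‖ = √‖(zᴴ * z) j j‖ := by
    rw [CStarModule.norm_eq_sqrt_norm_inner_self (A := C), hinner]
  rw [← hinner, ← hnorm, ← hnorm, mul_comm]
  exact CStarModule.norm_inner_le (A := C) _

theorem exists_matrix_star_mul_self_eq (a c : C) :
    ∃ y : Matrix (Fin 2) (Fin 2) C, (star y * y) 0 0 = star c * c ∧
      (star y * y) 0 1 = star c * a * c ∧ (star y * y) 1 1 = ‖a‖ ^ 2 • (star c * c) := by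
  let _ := CStarAlgebra.spectralOrder C
  have := CStarAlgebra.spectralOrderedRing C
  have hle : star c * (star a * a) * c ≤ ‖a‖ ^ 2 • (star c * c) := by
    simpa [CStarRing.norm_star_mul_self, sq] using
      CStarAlgebra.star_left_conjugate_le_norm_smul (a := c) (b := star a * a)
  obtain ⟨t, ht⟩ := CStarAlgebra.nonneg_iff_eq_star_mul_self.mp (sub_nonneg.mpr hle)
  refine ⟨!![c, a * c; 0, t], ?_, ?_, ?_⟩
  · simp [Matrix.mul_apply, Fin.sum_univ_two]
  · simp [Matrix.mul_apply, Fin.sum_univ_two, mul_assoc]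
  · simp [Matrix.mul_apply, Fin.sum_univ_two, ← ht, mul_assoc]

end CauchySchwarz

theorem CStarAlgebra.exists_mul_eq_one_approx_sqrt {D : Type*} [CStarAlgebra D] [PartialOrder D]
    [StarOrderedRing D] {h : D} (hh : 0 ≤ h) {δ : ℝ} (hδ : 0 < δ) :
    ∃ k m : D, k * m = 1 ∧ ‖star k * h * k‖ ≤ 1 ∧ ‖star m * m - h‖ ≤ δ := by
  have hpos (t : ℝ) : 0 < max t δ := lt_max_of_lt_right hδ
  have hsqrt : Continuous fun t : ℝ => √(max t δ) := by fun_prop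
  have hinv : Continuous fun t : ℝ => (√(max t δ))⁻¹ :=
    hsqrt.inv₀ fun t => (Real.sqrt_pos.mpr (hpos t)).ne'
  have hspec {t : ℝ} (ht : t ∈ spectrum ℝ h) : 0 ≤ t := spectrum_nonneg_of_nonneg hh ht
  refine ⟨cfc (fun t : ℝ => (√(max t δ))⁻¹) h, cfc (fun t : ℝ => √(max t δ)) h, ?_, ?_, ?_⟩
  · rw [← cfc_mul _ _ h hinv.continuousOn hsqrt.continuousOn, ← cfc_one ℝ h]
    exact cfc_congr fun t _ => inv_mul_cancel₀ (Real.sqrt_pos.mpr (hpos t)).ne'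
  · rw [IsSelfAdjoint.cfc.star_eq]
    nth_rw 2 [← cfc_id' ℝ h]
    rw [← cfc_mul _ _ h hinv.continuousOn (continuousOn_id' _), ←
      cfc_mul (fun t : ℝ => (√(max t δ))⁻¹ * t) _ h (hinv.mul continuous_id).continuousOn
        hinv.continuousOn]
    refine norm_cfc_le zero_le_one fun t ht => ?_
    rw [mul_right_comm, ← mul_inv, Real.mul_self_sqrt (hpos t).le, inv_mul_eq_div,
      Real.norm_of_nonneg (div_nonneg (hspec ht) (hpos t).le)]
    exact div_le_one_of_le₀ (le_max_left t δ) (hpos t).le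
  · rw [IsSelfAdjoint.cfc.star_eq, ← cfc_mul _ _ h hsqrt.continuousOn hsqrt.continuousOn]
    nth_rw 2 [← cfc_id' ℝ h]
    rw [← cfc_sub _ _ h]
    refine norm_cfc_le hδ.le fun t ht => ?_
    rw [Real.mul_self_sqrt (hpos t).le, Real.norm_of_nonneg (sub_nonneg.mpr (le_max_left t δ))]
    linarith [max_le_add_of_nonneg (hspec ht) hδ.le]

open Filter Topology in
theorem CStarAlgebra.exists_norm_le_one_star_mul_mul_sub_lt {A : Type*}
    [NonUnitalCStarAlgebra A] (F : Finset A) {ε : ℝ} (hε : 0 < ε) :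
    ∃ e : A, ‖e‖ ≤ 1 ∧ ∀ a ∈ F, ‖star e * a * e - a‖ < ε := by
  let _ := CStarAlgebra.spectralOrder A
  have := CStarAlgebra.spectralOrderedRing A
  have hunit := CStarAlgebra.increasingApproximateUnit A
  have hnear {f : A → A} {a : A} (hf : Tendsto f (approximateUnit A) (𝓝 a)) :
      ∀ᶠ e in approximateUnit A, ‖f e - a‖ < ε / 2 := by
    simpa only [dist_eq_norm] using Metric.tendsto_nhds.mp hf _ (half_pos hε)
  have hF : ∀ᶠ e in approximateUnit A, ∀ a ∈ F, ‖a * e - a‖ < ε / 2 ∧ ‖e * a - a‖ < ε / 2 :=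
    (eventually_all_finset F).2 fun a _ =>
      (hnear (hunit.tendsto_mul_left a)).and (hnear (hunit.tendsto_mul_right a))
  obtain ⟨e, heF, he₀, he₁⟩ := (hF.and (hunit.eventually_nonneg.and hunit.eventually_norm)).exists
  refine ⟨e, he₁, fun a ha => ?_⟩
  obtain ⟨hright, hleft⟩ := heF a ha
  calc ‖star e * a * e - a‖ = ‖e * (a * e - a) + (e * a - a)‖ := by
        rw [he₀.star_eq]; noncomm_ring
    _ ≤ ‖e‖ * ‖a * e - a‖ + ‖e * a - a‖ :=
        (norm_add_le _ _).trans (by gcongr; exact norm_mul_le _ _)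
    _ ≤ ‖a * e - a‖ + ‖e * a - a‖ := by
        gcongr; exact mul_le_of_le_one_left (norm_nonneg _) he₁
    _ < ε := by linarith

namespace IsCPMap

section Algebraic

variable {A B : Type*} [NonUnitalRing A] [StarRing A] [Module ℂ A]
  [NonUnitalRing B] [StarRing B] [Module ℂ B] {φ : A →ₗ[ℂ] B}

theorem exists_map_star_mul_self_eq (hφ : IsCPMap φ) (w : A) :
    ∃ b : B, φ (star w * w) = star b * b := by
  obtain ⟨z, hz⟩ := hφ 1 !![w]
  refine ⟨z 0 0, ?_⟩
  simpa [Matrix.mul_apply, Matrix.star_apply] using congrFun₂ hz 0 0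

theorem mulLeftRight_comp (hφ : IsCPMap φ) [SMulCommClass ℂ B B] [IsScalarTower ℂ B B]
    (c : B) : IsCPMap (LinearMap.mulLeftRight ℂ (star c, c) ∘ₗ φ) := by
  intro n y
  obtain ⟨z, hz⟩ := hφ n y
  refine ⟨z * Matrix.diagonal fun _ => c, Matrix.ext fun i j => ?_⟩
  rw [Matrix.star_mul_diagonal_mul_self_apply, ← hz]
  rfl

theorem comp_mulLeftRight (hφ : IsCPMap φ) [SMulCommClass ℂ A A] [IsScalarTower ℂ A A]
    (c : A) : IsCPMap (φ ∘ₗ LinearMap.mulLeftRight ℂ (star c, c)) := by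
  intro n y
  obtain ⟨z, hz⟩ := hφ n (y * Matrix.diagonal fun _ => c)
  refine ⟨z, Matrix.ext fun i j => ?_⟩
  rw [← hz, Matrix.map_apply, Matrix.map_apply, Matrix.star_mul_diagonal_mul_self_apply]
  rfl

theorem real_smul [SMulCommClass ℂ B B] [IsScalarTower ℂ B B] [StarModule ℂ B]
    (hφ : IsCPMap φ) {r : ℝ} (hr : 0 ≤ r) : IsCPMap ((r : ℂ) • φ) := by
  intro n y
  obtain ⟨z, hz⟩ := hφ n y
  refine ⟨((√r : ℝ) : ℂ) • z, ?_⟩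
  rw [star_smul, smul_mul_smul_comm, ← hz, Complex.star_def, Complex.conj_ofReal,
    ← Complex.ofReal_mul, Real.mul_self_sqrt hr]
  rfl

end Algebraic

variable {A B : Type*} [NonUnitalCStarAlgebra A] [NonUnitalCStarAlgebra B] {φ : A →ₗ[ℂ] B}

theorem norm_map_star_mul_mul_le (hφ : IsCPMap φ) (a c : A) :
    ‖φ (star c * a * c)‖ ≤ ‖a‖ * ‖φ (star c * c)‖ := by
  obtain ⟨y, h00, h01, h11⟩ := exists_matrix_star_mul_self_eq a c
  obtain ⟨z, hz⟩ := hφ 2 y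
  have hφy (i j : Fin 2) : φ ((star y * y) i j) = (zᴴ * z) i j := by
    rw [← Matrix.star_eq_conjTranspose, ← hz, Matrix.map_apply]
  have hcs := z.norm_conjTranspose_mul_self_apply_le 0 1
  rw [← hφy, ← hφy, ← hφy, h00, h01, h11, LinearMap.map_smul_of_tower, norm_smul,
    Real.norm_of_nonneg (by positivity), Real.sqrt_mul (by positivity),
    Real.sqrt_sq (norm_nonneg a)] at hcs
  calc ‖φ (star c * a * c)‖ ≤ √‖φ (star c * c)‖ * (‖a‖ * √‖φ (star c * c)‖) := hcs
    _ = ‖a‖ * ‖φ (star c * c)‖ := by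
      rw [mul_left_comm, Real.mul_self_sqrt (norm_nonneg _)]

theorem norm_map_le {D : Type*} [CStarAlgebra D] {η : D →ₗ[ℂ] B} (hη : IsCPMap η) (x : D) :
    ‖η x‖ ≤ ‖x‖ * ‖η 1‖ := by
  simpa using hη.norm_map_star_mul_mul_le x 1

theorem exists_contractive_factorization_conj {D : Type*} [CStarAlgebra D]
    {ψ₀ : A →ₗ[ℂ] D} {η₀ : D →ₗ[ℂ] B} (hψ₀ : IsCPMap ψ₀) (hη₀ : IsCPMap η₀) (e : A) {δ : ℝ}
    (hδ : 0 < δ) :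
    ∃ (ψ : A →ₗ[ℂ] D) (η : D →ₗ[ℂ] B), IsCPMap ψ ∧ IsCPMap η ∧ (∀ a, ‖ψ a‖ ≤ ‖a‖) ∧
      (∀ x, ‖η x‖ ≤ ‖x‖ * (‖η₀ (ψ₀ (star e * e))‖ + δ)) ∧
      ∀ a, η (ψ a) = η₀ (ψ₀ (star e * a * e)) := by
  let _ := CStarAlgebra.spectralOrder D
  have := CStarAlgebra.spectralOrderedRing D
  obtain ⟨b, hb⟩ := hψ₀.exists_map_star_mul_self_eq e
  set h := ψ₀ (star e * e)
  obtain ⟨k, m, hkm, hk, hm⟩ := CStarAlgebra.exists_mul_eq_one_approx_sqrt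
    (hb ▸ star_mul_self_nonneg b : 0 ≤ h) (δ := δ / (‖η₀ 1‖ + 1)) (by positivity)
  have hψ : IsCPMap (LinearMap.mulLeftRight ℂ (star k, k) ∘ₗ ψ₀) := hψ₀.mulLeftRight_comp k
  have hηm : ‖η₀ (star m * m)‖ ≤ ‖η₀ h‖ + δ :=
    calc ‖η₀ (star m * m)‖ ≤ ‖η₀ h‖ + ‖η₀ (star m * m - h)‖ := by
          simpa only [map_sub] using norm_le_insert' (η₀ (star m * m)) (η₀ h)
      _ ≤ ‖η₀ h‖ + δ / (‖η₀ 1‖ + 1) * ‖η₀ 1‖ := by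
          gcongr; exact (hη₀.norm_map_le _).trans (by gcongr)
      _ ≤ ‖η₀ h‖ + δ := by
          gcongr
          rw [div_mul_eq_mul_div, div_le_iff₀ (by positivity)]
          nlinarith [norm_nonneg (η₀ 1)]
  refine ⟨LinearMap.mulLeftRight ℂ (star k, k) ∘ₗ ψ₀ ∘ₗ LinearMap.mulLeftRight ℂ (star e, e),
    η₀ ∘ₗ LinearMap.mulLeftRight ℂ (star m, m), hψ.comp_mulLeftRight e,
    hη₀.comp_mulLeftRight m, fun a => ?_, fun x => ?_, fun a => ?_⟩
  · calc _ ≤ ‖a‖ * ‖star k * h * k‖ := hψ.norm_map_star_mul_mul_le a e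
      _ ≤ ‖a‖ := mul_le_of_le_one_right (norm_nonneg a) hk
  · calc _ ≤ ‖x‖ * ‖η₀ (star m * m)‖ := hη₀.norm_map_star_mul_mul_le x m
      _ ≤ ‖x‖ * (‖η₀ h‖ + δ) := by gcongr
  · have hcancel (x : D) : star m * (star k * x * k) * m = x :=
      calc star m * (star k * x * k) * m = star (k * m) * x * (k * m) := by
            rw [star_mul]; noncomm_ring
        _ = x := by rw [hkm, star_one, one_mul, mul_one]
    exact congrArg η₀ (hcancel _)

theorem exists_contractive_of_norm_le {D : Type*} [NonUnitalCStarAlgebra D] {η : D →ₗ[ℂ] B}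
    (hη : IsCPMap η) {β : ℝ} (hβ : 1 ≤ β) (hη_le : ∀ x, ‖η x‖ ≤ ‖x‖ * β) :
    ∃ η' : D →ₗ[ℂ] B, IsCPMap η' ∧ (∀ x, ‖η' x‖ ≤ ‖x‖) ∧
      ∀ x, ‖η x - η' x‖ ≤ (β - 1) * ‖x‖ := by
  have hβ₀ : 0 < β := zero_lt_one.trans_le hβ
  have hnorm_smul (r : ℝ) (hr : 0 ≤ r) (x : D) : ‖((r : ℂ) • η) x‖ = r * ‖η x‖ := by
    rw [LinearMap.smul_apply, norm_smul, Complex.norm_real, Real.norm_of_nonneg hr]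
  refine ⟨((β⁻¹ : ℝ) : ℂ) • η, hη.real_smul (by positivity), fun x => ?_, fun x => ?_⟩
  · rw [hnorm_smul _ (by positivity), inv_mul_le_iff₀ hβ₀, mul_comm]
    exact hη_le x
  · have hβ' : 0 ≤ 1 - β⁻¹ := sub_nonneg.mpr (inv_le_one_of_one_le₀ hβ)
    calc ‖η x - ((β⁻¹ : ℝ) : ℂ) • η x‖ = ‖(((1 - β⁻¹ : ℝ) : ℂ) • η) x‖ := by
          rw [LinearMap.smul_apply]; push_cast; rw [sub_smul, one_smul]
      _ ≤ (1 - β⁻¹) * (‖x‖ * β) := by rw [hnorm_smul _ hβ']; gcongr; exact hη_le x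
      _ = (β - 1) * ‖x‖ := by field_simp

end IsCPMap

open Filter Topology in
theorem Finset.exists_pos_forall_mul_lt {ι : Type*} (F : Finset ι) (f : ι → ℝ) {ε : ℝ}
    (hε : 0 < ε) : ∃ δ > 0, ∀ i ∈ F, δ * f i < ε := by
  have hsmall : ∀ᶠ δ in 𝓝 (0 : ℝ), ∀ i ∈ F, δ * f i < ε :=
    (eventually_all_finset F).2 fun i _ =>
      ((continuous_id.mul continuous_const).tendsto' 0 0 (zero_mul (f i))).eventually
        (gt_mem_nhds hε)
  obtain ⟨δ, hδF, hδ⟩ :=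
    ((hsmall.filter_mono nhdsWithin_le_nhds).and (self_mem_nhdsWithin (s := Set.Ioi 0))).exists
  exact ⟨δ, hδ, hδF⟩

theorem contractive_nuclear_approx_factor_contractive_general
    {A B : Type*} [NonUnitalCStarAlgebra A] [NonUnitalCStarAlgebra B]
    (ρ : A →ₗ[ℂ] B) (hnuc : IsNuclearMap ρ)
    (hcontr : ∀ a : A, ‖ρ a‖ ≤ ‖a‖) :
    ∀ (F : Finset A) (ε : ℝ), 0 < ε →
      ∃ (n : ℕ), 0 < n ∧
        ∃ (ψ : A →ₗ[ℂ] Matrix (Fin n) (Fin n) ℂ) (η : Matrix (Fin n) (Fin n) ℂ →ₗ[ℂ] B),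
          IsCPMap ψ ∧ IsCPMap η ∧
          (∀ a : A, ‖ψ a‖ ≤ ‖a‖) ∧ (∀ x : Matrix (Fin n) (Fin n) ℂ, ‖η x‖ ≤ ‖x‖) ∧
          ∀ a ∈ F, ‖ρ a - η (ψ a)‖ < ε := by
  intro F ε hε
  classical
  obtain ⟨e, he, heF⟩ := CStarAlgebra.exists_norm_le_one_star_mul_mul_sub_lt F (half_pos hε)
  obtain ⟨δ, hδ, hδF⟩ := F.exists_pos_forall_mul_lt (fun a => 1 + 2 * ‖a‖) (half_pos hε)
  obtain ⟨n, hn, ψ₀, η₀, hψ₀, hη₀, happrox⟩ :=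
    hnuc (insert (star e * e) (F.image fun a => star e * a * e)) δ hδ
  obtain ⟨ψ, η, hψ, hη, hψ_le, hη_le, hηψ⟩ := hψ₀.exists_contractive_factorization_conj hη₀ e hδ
  have hee : ‖η₀ (ψ₀ (star e * e))‖ + δ ≤ 1 + 2 * δ := by
    have hρ : ‖ρ (star e * e)‖ ≤ 1 :=
      (hcontr _).trans <| by
        rw [CStarRing.norm_star_mul_self]; exact mul_le_one₀ he (norm_nonneg e) he
    have := norm_le_insert (ρ (star e * e)) (η₀ (ψ₀ (star e * e)))
    linarith [happrox _ (Finset.mem_insert_self _ _)]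
  obtain ⟨η', hη', hη'_le, hηη'⟩ :=
    hη.exists_contractive_of_norm_le (β := 1 + 2 * δ) (by linarith) fun x =>
      (hη_le x).trans (by gcongr)
  refine ⟨n, hn, ψ, η', hψ, hη', hψ_le, hη'_le, fun a ha => ?_⟩
  have hρa : ‖ρ a - ρ (star e * a * e)‖ < ε / 2 := by
    rw [norm_sub_rev, ← map_sub]; exact (hcontr _).trans_lt (heF a ha)
  have hρeae : ‖ρ (star e * a * e) - η (ψ a)‖ < δ := by
    rw [hηψ]; exact happrox _ (Finset.mem_insert_of_mem (Finset.mem_image_of_mem _ ha))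
  have hscale : ‖η (ψ a) - η' (ψ a)‖ ≤ 2 * δ * ‖a‖ :=
    (hηη' _).trans (by rw [add_sub_cancel_left]; gcongr; exact hψ_le a)
  calc ‖ρ a - η' (ψ a)‖
      ≤ ‖ρ a - ρ (star e * a * e)‖ + ‖ρ (star e * a * e) - η (ψ a)‖ + ‖η (ψ a) - η' (ψ a)‖ :=
        (norm_sub_le_norm_sub_add_norm_sub _ _ _).trans
          (by gcongr; exact norm_sub_le_norm_sub_add_norm_sub _ _ _)
    _ < ε / 2 + δ + 2 * δ * ‖a‖ := add_lt_add_of_lt_of_le (add_lt_add hρa hρeae) hscale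
    _ < ε := by linarith [hδF a ha]

/-- Lemma: contractive nuclear maps factor approximately through
matrix algebras via *contractive* c.p. maps.  Here the matrix algebra `Mₙ(ℂ)` carries its
C*-norm (the `ℓ²` operator norm). -/
theorem contractive_nuclear_approx_factor_contractive
    {A B : Type*} [NonUnitalCStarAlgebra A] [NonUnitalCStarAlgebra B]
    (ρ : A →ₗ[ℂ] B) (hcp : IsCPMap ρ) (hnuc : IsNuclearMap ρ)
    (hcontr : ∀ a : A, ‖ρ a‖ ≤ ‖a‖) :
    ∀ (F : Finset A) (ε : ℝ), 0 < ε →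
      ∃ (n : ℕ), 0 < n ∧
        ∃ (ψ : A →ₗ[ℂ] Matrix (Fin n) (Fin n) ℂ) (η : Matrix (Fin n) (Fin n) ℂ →ₗ[ℂ] B),
          IsCPMap ψ ∧ IsCPMap η ∧
          (∀ a : A, ‖ψ a‖ ≤ ‖a‖) ∧ (∀ x : Matrix (Fin n) (Fin n) ℂ, ‖η x‖ ≤ ‖x‖) ∧
          ∀ a ∈ F, ‖ρ a - η (ψ a)‖ < ε :=
  contractive_nuclear_approx_factor_contractive_general ρ hnuc hcontr
end

section
/- Let X be a topological space, let L be a complete lattice, and let Φ : Opens(X) → L be an order-preserving map that preserves arbitrary infima and that preserves suprema of nonempty upwards-directed families (Φ(⨆S) = ⨆Φ(S) for every nonempty upwards-directed family S of open sets). Define Ψ : L → Opens(X) by Ψ(I) = the interior of the intersection of all open sets V with I ≤ Φ(V). Then Ψ preserves compact containment: if I, J ∈ L satisfy I ⋐ J in L, then Ψ(I) ⋐ Ψ(J) in Opens(X). -/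
/-!
Since `Φ` preserves infima, `Ψ` is its lower adjoint. Compact containment `a ⋐ b` only has
to be tested on nonempty directed families (replace a family by the set of its finite
suprema), and `l b ≤ ⨆ D` turns into `b ≤ u (⨆ D) = ⨆ u '' D` for a Galois connection
`l ⊣ u` whose upper adjoint preserves directed suprema; so `a ⋐ b` yields `a ≤ u d`, i.e.
`l a ≤ d`, for some `d ∈ D`.
-/

open TopologicalSpace

/-- In a complete lattice, `a` is compactly contained in `b` if whenever `b` is below the
supremum of a family, `a` is already below the supremum of finitely many of its members. -/
def CompactlyContained {L : Type*} [CompleteLattice L] (a b : L) : Prop :=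
  ∀ S : Set L, b ≤ sSup S → ∃ F : Finset L, ↑F ⊆ S ∧ a ≤ F.sup id

section CompleteLattice

variable {α β : Type*} [CompleteLattice α] [CompleteLattice β]

theorem directedOn_finsetSup_image (S : Set α) :
    DirectedOn (· ≤ ·) ((fun F : Finset α => F.sup id) '' {F | ↑F ⊆ S}) := by
  classical
  rintro _ ⟨F₁, hF₁, rfl⟩ _ ⟨F₂, hF₂, rfl⟩
  refine ⟨(F₁ ∪ F₂).sup id, ⟨F₁ ∪ F₂, ?_, rfl⟩, ?_, ?_⟩
  · simpa only [Set.mem_ofPred_eq, Finset.coe_union] using Set.union_subset hF₁ hF₂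
  · exact Finset.sup_mono Finset.subset_union_left
  · exact Finset.sup_mono Finset.subset_union_right

theorem sSup_le_sSup_finsetSup_image (S : Set α) :
    sSup S ≤ sSup ((fun F : Finset α => F.sup id) '' {F | ↑F ⊆ S}) :=
  sSup_le fun s hs => le_sSup ⟨{s}, by simpa using hs, Finset.sup_singleton⟩

theorem compactlyContained_iff_directedOn {a b : α} :
    CompactlyContained a b ↔ ∀ D : Set α, D.Nonempty → DirectedOn (· ≤ ·) D →
      b ≤ sSup D → ∃ d ∈ D, a ≤ d := by
  constructor
  · intro h D hne hdir hle
    obtain ⟨F, hFD, haF⟩ := h D hle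
    obtain ⟨d, hd, hFd⟩ :=
      Finset.sup_le_of_le_directed D hne hdir F fun x hx => ⟨x, hFD hx, le_rfl⟩
    exact ⟨d, hd, haF.trans hFd⟩
  · intro h S hle
    have hne : ((fun F : Finset α => F.sup id) '' {F | ↑F ⊆ S}).Nonempty :=
      ⟨⊥, ∅, by simp, Finset.sup_empty⟩
    obtain ⟨_, ⟨F, hFS, rfl⟩, haF⟩ :=
      h _ hne (directedOn_finsetSup_image S) (hle.trans (sSup_le_sSup_finsetSup_image S))
    exact ⟨F, hFS, haF⟩

theorem GaloisConnection.compactlyContained_map {l : α → β} {u : β → α}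
    (gc : GaloisConnection l u)
    (hu : ∀ D : Set β, D.Nonempty → DirectedOn (· ≤ ·) D → u (sSup D) = sSup (u '' D))
    {a b : α} (hab : CompactlyContained a b) : CompactlyContained (l a) (l b) := by
  rw [compactlyContained_iff_directedOn] at hab ⊢
  intro D hne hdir hle
  have hb : b ≤ sSup (u '' D) := hu D hne hdir ▸ gc.le_iff_le.1 hle
  obtain ⟨_, ⟨d, hd, rfl⟩, had⟩ :=
    hab (u '' D) (hne.image u) (hdir.mono_comp fun _ _ h => gc.monotone_u h) hb
  exact ⟨d, hd, gc.l_le had⟩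

theorem galoisConnection_sInf_of_map_sInf {u : α → β} (hu : Monotone u)
    (h : ∀ S : Set α, u (sInf S) = sInf (u '' S)) :
    GaloisConnection (fun b => sInf {a | b ≤ u a}) u := by
  intro b a
  refine ⟨fun hba => le_trans ?_ (hu hba), fun hb => sInf_le hb⟩
  rw [h]
  exact le_sInf (Set.forall_mem_image.2 fun _ ha => ha)

end CompleteLattice

/-- The dual action of a monotone continuous action preserves compact
containment.  Let `Φ : Opens X → L` be order-preserving, preserve arbitrary infima, and
preserve suprema of nonempty upwards-directed families.  Let `Ψ I = sInf {V | I ≤ Φ V}`.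
Then `I ⋐ J` in `L` implies `Ψ I ⋐ Ψ J` in `Opens X`. -/
theorem dual_action_preserves_compactContainment
    {X : Type*} [TopologicalSpace X] {L : Type*} [CompleteLattice L]
    (Φ : Opens X → L) (hmono : Monotone Φ)
    (hinf : ∀ S : Set (Opens X), Φ (sInf S) = sInf (Φ '' S))
    (hdirsup : ∀ S : Set (Opens X), S.Nonempty → DirectedOn (· ≤ ·) S →
      Φ (sSup S) = sSup (Φ '' S)) :
    ∀ I J : L, CompactlyContained I J →
      CompactlyContained (sInf {V : Opens X | I ≤ Φ V}) (sInf {V : Opens X | J ≤ Φ V}) :=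
  fun _ _ => (galoisConnection_sInf_of_map_sInf hmono hinf).compactlyContained_map hdirsup
end
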